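/- Let X be a countable set and let P, H_1, H_2 be probability distributions on X. Let S = {x ∈ X : H_1(x) < H_2(x)}, and set w_{1→2} = |H_2(S) − P(S)| and w_{2→1} = |H_1(X∖S) − P(X∖S)|. If w_{1→2} + w_{2→1} > 0, then (w_{1→2}·d_TV(P,H_1) + w_{2→1}·d_TV(P,H_2)) / (w_{1→2} + w_{2→1}) ≤ 2·min(d_TV(P,H_1), d_TV(P,H_2)). (Claim of Section 1.3.2: the randomized two-hypothesis rule achieves expected distance at most 2·OPT.) -/
import Mathlib

private lemma abs_tsum_le_tsum_abs' {Y : Type*} (f : Y → ℝ) (hf : Summable f) :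
    |∑' x, f x| ≤ ∑' x, |f x| := by
  have := norm_tsum_le_tsum_norm (f := f) (by simpa [Real.norm_eq_abs] using hf.abs)
  simpa [Real.norm_eq_abs] using this

private lemma tv_set_bound {X : Type*} (P Q : X → ℝ)
    (hPs : Summable P) (hQs : Summable Q)
    (hP1 : ∑' x, P x = 1) (hQ1 : ∑' x, Q x = 1) (T : Set X) :
    |(∑' x : T, Q x) - (∑' x : T, P x)| ≤ (1 / 2) * ∑' x, |P x - Q x| := by
  set f : X → ℝ := fun x => Q x - P x with hf
  have hfs : Summable f := hQs.sub hPs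
  have hftot : ∑' x, f x = 0 := by
    rw [hf]; rw [Summable.tsum_sub hQs hPs, hQ1, hP1]; ring
  have hsplit : (∑' x : T, f x) + (∑' x : ↥Tᶜ, f x) = 0 := by
    rw [Summable.tsum_add_tsum_compl (hfs.subtype T) (hfs.subtype Tᶜ), hftot]
  have habs : (∑' x : T, |f x|) + (∑' x : ↥Tᶜ, |f x|) = ∑' x, |f x| :=
    Summable.tsum_add_tsum_compl (hfs.abs.subtype T) (hfs.abs.subtype Tᶜ)
  have h1 : |∑' x : T, f x| ≤ ∑' x : T, |f x| :=
    abs_tsum_le_tsum_abs' _ (hfs.subtype T)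
  have h2 : |∑' x : ↥Tᶜ, f x| ≤ ∑' x : ↥Tᶜ, |f x| :=
    abs_tsum_le_tsum_abs' _ (hfs.subtype Tᶜ)
  have hTa : (∑' x : T, f x) = (∑' x : T, Q x) - (∑' x : T, P x) := by
    rw [hf]; exact Summable.tsum_sub (hQs.subtype T) (hPs.subtype T)
  have hcomp : (∑' x : ↥Tᶜ, f x) = -((∑' x : T, Q x) - (∑' x : T, P x)) := by
    rw [← hTa]; linarith
  have heq : ∑' x, |f x| = ∑' x, |P x - Q x| := by
    apply tsum_congr; intro x; rw [hf]; exact abs_sub_comm _ _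
  rw [hTa] at h1
  rw [hcomp, abs_neg] at h2
  linarith [habs, heq]

/-- **Claim of Section 1.3.2** (the randomized two-hypothesis rule achieves `2·OPT`).
For probability distributions `P, H1, H2` on a countable set `X`, with
`S = {x | H1 x < H2 x}`, `w12 = |H2(S) − P(S)|`, `w21 = |H1(Sᶜ) − P(Sᶜ)|`,
if `w12 + w21 > 0` then the expected distance of the randomized rule,
`(w12·d_TV(P,H1) + w21·d_TV(P,H2))/(w12 + w21)`, is at most
`2·min(d_TV(P,H1), d_TV(P,H2))`. -/
theorem two_hypothesis_expected_two_opt {X : Type*} [Countable X]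
    (P H1 H2 : X → ℝ)
    (hP0 : ∀ x, 0 ≤ P x) (hPs : Summable P) (hP1 : ∑' x, P x = 1)
    (hH10 : ∀ x, 0 ≤ H1 x) (hH1s : Summable H1) (hH11 : ∑' x, H1 x = 1)
    (hH20 : ∀ x, 0 ≤ H2 x) (hH2s : Summable H2) (hH21 : ∑' x, H2 x = 1)
    (S : Set X) (hS : S = {x | H1 x < H2 x})
    (w12 w21 : ℝ)
    (hw12 : w12 = |(∑' x : S, H2 x) - (∑' x : S, P x)|)
    (hw21 : w21 = |(∑' x : ↥Sᶜ, H1 x) - (∑' x : ↥Sᶜ, P x)|)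
    (hpos : 0 < w12 + w21) :
    (w12 * ((1 / 2) * ∑' x, |P x - H1 x|) + w21 * ((1 / 2) * ∑' x, |P x - H2 x|))
        / (w12 + w21)
      ≤ 2 * min ((1 / 2) * ∑' x, |P x - H1 x|) ((1 / 2) * ∑' x, |P x - H2 x|) := by
  set d1 : ℝ := (1 / 2) * ∑' x, |P x - H1 x| with hd1
  set d2 : ℝ := (1 / 2) * ∑' x, |P x - H2 x| with hd2
  set δ : ℝ := (1 / 2) * ∑' x, |H1 x - H2 x| with hδ
  have hPH1 : Summable fun x => |P x - H1 x| := (hPs.sub hH1s).abs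
  have hPH2 : Summable fun x => |P x - H2 x| := (hPs.sub hH2s).abs
  have hHH : Summable fun x => |H1 x - H2 x| := (hH1s.sub hH2s).abs
  -- w21 ≤ d1
  have h21 : w21 ≤ d1 := by
    rw [hw21]; exact tv_set_bound P H1 hPs hH1s hP1 hH11 Sᶜ
  -- w12 ≤ d2
  have h12 : w12 ≤ d2 := by
    rw [hw12]; exact tv_set_bound P H2 hPs hH2s hP1 hH21 S
  -- totals split
  have hsplitP : (∑' x : S, P x) + (∑' x : ↥Sᶜ, P x) = 1 := by
    rw [Summable.tsum_add_tsum_compl (hPs.subtype S) (hPs.subtype Sᶜ), hP1]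
  have hsplit1 : (∑' x : S, H1 x) + (∑' x : ↥Sᶜ, H1 x) = 1 := by
    rw [Summable.tsum_add_tsum_compl (hH1s.subtype S) (hH1s.subtype Sᶜ), hH11]
  have hsplit2 : (∑' x : S, H2 x) + (∑' x : ↥Sᶜ, H2 x) = 1 := by
    rw [Summable.tsum_add_tsum_compl (hH2s.subtype S) (hH2s.subtype Sᶜ), hH21]
  -- δ = H2(S) - H1(S)
  have hδeq : δ = (∑' x : S, H2 x) - (∑' x : S, H1 x) := by
    have hsplitA : (∑' x : S, |H1 x - H2 x|) + (∑' x : ↥Sᶜ, |H1 x - H2 x|)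
        = ∑' x, |H1 x - H2 x| :=
      Summable.tsum_add_tsum_compl (hHH.subtype S) (hHH.subtype Sᶜ)
    have hA : (∑' x : S, |H1 x - H2 x|) = (∑' x : S, H2 x) - (∑' x : S, H1 x) := by
      have : (∑' x : S, |H1 x - H2 x|) = ∑' x : S, (H2 x - H1 x) := by
        apply tsum_congr; intro ⟨x, hx⟩
        rw [hS] at hx
        rw [abs_sub_comm, abs_of_nonneg (by simp only [Set.mem_setOf_eq] at hx; linarith)]
      rw [this]; exact Summable.tsum_sub (hH2s.subtype S) (hH1s.subtype S)
    have hB : (∑' x : ↥Sᶜ, |H1 x - H2 x|)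
        = (∑' x : ↥Sᶜ, H1 x) - (∑' x : ↥Sᶜ, H2 x) := by
      have : (∑' x : ↥Sᶜ, |H1 x - H2 x|) = ∑' x : ↥Sᶜ, (H1 x - H2 x) := by
        apply tsum_congr; intro ⟨x, hx⟩
        rw [hS] at hx
        simp only [Set.mem_compl_iff, Set.mem_setOf_eq, not_lt] at hx
        rw [abs_of_nonneg (by linarith)]
      rw [this]; exact Summable.tsum_sub (hH1s.subtype Sᶜ) (hH2s.subtype Sᶜ)
    rw [hδ, ← hsplitA, hA, hB]
    linarith [hsplit1, hsplit2]
  -- δ ≤ w12 + w21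
  have hδle : δ ≤ w12 + w21 := by
    have ha : (∑' x : S, H2 x) - (∑' x : S, P x) ≤ w12 := hw12 ▸ le_abs_self _
    have hb : (∑' x : ↥Sᶜ, H1 x) - (∑' x : ↥Sᶜ, P x) ≤ w21 := hw21 ▸ le_abs_self _
    rw [hδeq]
    linarith [hsplitP, hsplit1]
  -- triangle inequalities
  have htri : ∀ x, |P x - H2 x| ≤ |P x - H1 x| + |H1 x - H2 x| := fun x =>
    (abs_sub_le _ _ _)
  have htri' : ∀ x, |P x - H1 x| ≤ |P x - H2 x| + |H1 x - H2 x| := fun x => by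
    rw [abs_sub_comm (H1 x)]; exact abs_sub_le _ _ _
  have hd2le : d2 ≤ d1 + δ := by
    have : (∑' x, |P x - H2 x|) ≤ ∑' x, (|P x - H1 x| + |H1 x - H2 x|) :=
      Summable.tsum_le_tsum htri hPH2 (hPH1.add hHH)
    rw [Summable.tsum_add hPH1 hHH] at this
    rw [hd1, hd2, hδ]; linarith
  have hd1le : d1 ≤ d2 + δ := by
    have : (∑' x, |P x - H1 x|) ≤ ∑' x, (|P x - H2 x| + |H1 x - H2 x|) :=
      Summable.tsum_le_tsum htri' hPH1 (hPH2.add hHH)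
    rw [Summable.tsum_add hPH2 hHH] at this
    rw [hd1, hd2, hδ]; linarith
  have hw120 : 0 ≤ w12 := hw12 ▸ abs_nonneg _
  have hw210 : 0 ≤ w21 := hw21 ▸ abs_nonneg _
  have hδ0 : 0 ≤ δ := by
    rw [hδ]
    have : 0 ≤ ∑' x, |H1 x - H2 x| := tsum_nonneg fun x => abs_nonneg _
    linarith
  rw [div_le_iff₀ hpos]
  rcases le_total d1 d2 with hmin | hmin
  · rw [min_eq_left hmin]
    nlinarith [mul_le_mul h21 hδle hδ0 (le_trans hw210 h21)]
  · rw [min_eq_right hmin]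
    nlinarith [mul_le_mul h12 hδle hδ0 (le_trans hw120 h12)]
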